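/- Let α ∈ (0,n), 1<p_1,p_2<∞ with 1/p := 1/p_1 + 1/p_2 < 1, and set r = p_1/p, s = p_2/p (so r,s>1 and 1/r + 1/s = 1). Then there is a constant C, depending only on n, α, and the fixed parameters s_1, s_2, such that for all nonnegative measurable f,g on R^n and all x ∈ R^n: B_α(f,g)(x) ≤ C ( I_α(f^r)(x) )^{1/r} ( I_α(g^s)(x) )^{1/s}. -/

import Mathlib

/-!
Hölder's inequality with the conjugate exponents `r, s` for the measure `|y|^(α-n) dy` bounds
`B_α(f,g)(x)` by the product of `(∫ f(x - s_i y)^r |y|^(α-n) dy)^(1/r)` and its analogue for `g`.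
Since the kernel is homogeneous of degree `α - n`, the substitution `z = s_i y` turns each of
these integrals into `|s_i|^(-α) I_α(f^r)(x)`.
-/

open MeasureTheory Metric
open scoped ENNReal

noncomputable section

/-- The bilinear fractional integral `B_α` of nonnegative functions,
as an unsigned integral. -/
def BopL (n : ℕ) (α s₁ s₂ : ℝ) (f g : EuclideanSpace ℝ (Fin n) → ℝ)
    (x : EuclideanSpace ℝ (Fin n)) : ℝ≥0∞ :=
  ∫⁻ y, ENNReal.ofReal (f (x - s₁ • y)) * ENNReal.ofReal (g (x - s₂ • y)) *
    ENNReal.ofReal (‖y‖ ^ (α - n))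

/-- The linear fractional integral `I_α` of a nonnegative function,
as an unsigned integral. -/
def IopL (n : ℕ) (α : ℝ) (f : EuclideanSpace ℝ (Fin n) → ℝ)
    (x : EuclideanSpace ℝ (Fin n)) : ℝ≥0∞ :=
  ∫⁻ y, ENNReal.ofReal (f (x - y)) * ENNReal.ofReal (‖y‖ ^ (α - n))

open Module

theorem ENNReal.lintegral_mul_mul_le_Lp_mul_Lq_of_weight {X : Type*} [MeasurableSpace X]
    (μ : Measure X) {p q : ℝ} (hpq : p.HolderConjugate q) {f g w : X → ℝ≥0∞}
    (hf : AEMeasurable f μ) (hg : AEMeasurable g μ) (hw : AEMeasurable w μ) :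
    ∫⁻ a, f a * g a * w a ∂μ ≤
      (∫⁻ a, f a ^ p * w a ∂μ) ^ (1 / p) * (∫⁻ a, g a ^ q * w a ∂μ) ^ (1 / q) := by
  have hac := withDensity_absolutelyContinuous μ w
  have holder := ENNReal.lintegral_mul_le_Lp_mul_Lq (μ.withDensity w) hpq
    (hf.mono_ac hac) (hg.mono_ac hac)
  rw [lintegral_withDensity_eq_lintegral_mul₀ hw (hf.mul hg),
    lintegral_withDensity_eq_lintegral_mul₀ hw (hf.pow_const p),
    lintegral_withDensity_eq_lintegral_mul₀ hw (hg.pow_const q)] at holder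
  simpa only [Pi.mul_apply, mul_comm (w _)] using holder

section Scaling

variable {E : Type*} [NormedAddCommGroup E] [NormedSpace ℝ E] [FiniteDimensional ℝ E]
  [MeasurableSpace E] [BorelSpace E] (μ : Measure E) [μ.IsAddHaarMeasure]

theorem lintegral_comp_smul_addHaar (φ : E → ℝ≥0∞) {c : ℝ} (hc : c ≠ 0) :
    ∫⁻ y, φ (c • y) ∂μ = ENNReal.ofReal |(c ^ finrank ℝ E)⁻¹| * ∫⁻ y, φ y ∂μ := by
  rw [← smul_eq_mul, ← lintegral_smul_measure, ← Measure.map_addHaar_smul μ hc]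
  exact (lintegral_map_equiv φ (MeasurableEquiv.smul₀ c hc)).symm

theorem lintegral_comp_smul_mul_rpow_norm (φ : E → ℝ≥0∞) (γ : ℝ) {c : ℝ} (hc : c ≠ 0) :
    ∫⁻ y, φ (c • y) * ENNReal.ofReal (‖y‖ ^ γ) ∂μ =
      ENNReal.ofReal (|c| ^ (-(γ + finrank ℝ E))) * ∫⁻ y, φ y * ENNReal.ofReal (‖y‖ ^ γ) ∂μ := by
  have hc' : 0 < |c| := abs_pos.mpr hc
  have weight_smul (y : E) : ENNReal.ofReal (‖y‖ ^ γ) =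
      ENNReal.ofReal (|c| ^ (-γ)) * ENNReal.ofReal (‖c • y‖ ^ γ) := by
    rw [norm_smul, Real.norm_eq_abs, Real.mul_rpow (abs_nonneg c) (norm_nonneg y),
      ← ENNReal.ofReal_mul (by positivity), ← mul_assoc, ← Real.rpow_add hc', neg_add_cancel,
      Real.rpow_zero, one_mul]
  have jacobian : |(c ^ finrank ℝ E)⁻¹| = |c| ^ (-(finrank ℝ E : ℝ)) := by
    rw [abs_inv, abs_pow, ← Real.rpow_natCast, Real.rpow_neg (abs_nonneg c)]
  calc ∫⁻ y, φ (c • y) * ENNReal.ofReal (‖y‖ ^ γ) ∂μ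
      = ENNReal.ofReal (|c| ^ (-γ)) * ∫⁻ y, φ (c • y) * ENNReal.ofReal (‖c • y‖ ^ γ) ∂μ := by
        rw [← lintegral_const_mul' _ _ ENNReal.ofReal_ne_top]
        refine lintegral_congr fun y => ?_
        rw [weight_smul y, mul_left_comm]
    _ = ENNReal.ofReal (|c| ^ (-γ)) * (ENNReal.ofReal |(c ^ finrank ℝ E)⁻¹| *
          ∫⁻ y, φ y * ENNReal.ofReal (‖y‖ ^ γ) ∂μ) := by
        rw [lintegral_comp_smul_addHaar μ (fun z => φ z * ENNReal.ofReal (‖z‖ ^ γ)) hc]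
    _ = _ := by
        rw [← mul_assoc, ← ENNReal.ofReal_mul (by positivity), jacobian, ← Real.rpow_add hc',
          neg_add]

end Scaling

theorem lintegral_rpow_comp_sub_smul_eq_IopL (n : ℕ) (α : ℝ) {f : EuclideanSpace ℝ (Fin n) → ℝ}
    (hf : ∀ z, 0 ≤ f z) {r : ℝ} (hr : 0 ≤ r) {c : ℝ} (hc : c ≠ 0)
    (x : EuclideanSpace ℝ (Fin n)) :
    ∫⁻ y, ENNReal.ofReal (f (x - c • y)) ^ r * ENNReal.ofReal (‖y‖ ^ (α - n)) =
      ENNReal.ofReal (|c| ^ (-α)) * IopL n α (fun z => f z ^ r) x := by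
  have scaling := lintegral_comp_smul_mul_rpow_norm volume
    (fun z => ENNReal.ofReal (f (x - z) ^ r)) (α - n) hc
  rw [finrank_euclideanSpace_fin, sub_add_cancel] at scaling
  simpa only [IopL, ENNReal.ofReal_rpow_of_nonneg (hf _) hr] using scaling

theorem statement8_general (n : ℕ) (s₁ s₂ : ℝ)
    (hs₁ : s₁ ≠ 0) (hs₂ : s₂ ≠ 0)
    (α : ℝ)
    (p₁ p₂ p r s : ℝ) (hp₁ : 1 < p₁) (hp₂ : 1 < p₂)
    (hp : 1 / p = 1 / p₁ + 1 / p₂)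
    (hr : r = p₁ / p) (hsdef : s = p₂ / p) :
    ∃ C : ℝ, 0 < C ∧ ∀ f g : EuclideanSpace ℝ (Fin n) → ℝ,
      Measurable f → Measurable g → (∀ x, 0 ≤ f x) → (∀ x, 0 ≤ g x) →
      ∀ x : EuclideanSpace ℝ (Fin n),
        BopL n α s₁ s₂ f g x
          ≤ ENNReal.ofReal C * (IopL n α (fun y => f y ^ r) x) ^ (1 / r) *
              (IopL n α (fun y => g y ^ s) x) ^ (1 / s) := by
  have hrs : r.HolderConjugate s := hr ▸ hsdef ▸
    Real.HolderTriple.holderConjugate_div_div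
      ⟨by simpa only [one_div] using hp.symm, by linarith, by linarith⟩
  have hr₀ := hrs.nonneg
  have hs₀ := hrs.symm.nonneg
  refine ⟨(|s₁| ^ (-α)) ^ (1 / r) * (|s₂| ^ (-α)) ^ (1 / s), by positivity,
    fun f g hf hg hf₀ hg₀ x => ?_⟩
  have translate {h : EuclideanSpace ℝ (Fin n) → ℝ} (hh : Measurable h) (c : ℝ) :
      AEMeasurable fun y => ENNReal.ofReal (h (x - c • y)) := by fun_prop
  calc BopL n α s₁ s₂ f g x
      ≤ (∫⁻ y, ENNReal.ofReal (f (x - s₁ • y)) ^ r * ENNReal.ofReal (‖y‖ ^ (α - n))) ^ (1 / r) *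
          (∫⁻ y, ENNReal.ofReal (g (x - s₂ • y)) ^ s * ENNReal.ofReal (‖y‖ ^ (α - n))) ^ (1 / s) :=
        ENNReal.lintegral_mul_mul_le_Lp_mul_Lq_of_weight volume hrs (translate hf s₁)
          (translate hg s₂) (by fun_prop)
    _ = (ENNReal.ofReal (|s₁| ^ (-α)) * IopL n α (fun y => f y ^ r) x) ^ (1 / r) *
          (ENNReal.ofReal (|s₂| ^ (-α)) * IopL n α (fun y => g y ^ s) x) ^ (1 / s) := by
        rw [lintegral_rpow_comp_sub_smul_eq_IopL n α hf₀ hr₀ hs₁,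
          lintegral_rpow_comp_sub_smul_eq_IopL n α hg₀ hs₀ hs₂]
    _ = _ := by
        rw [ENNReal.mul_rpow_of_nonneg _ _ (by positivity),
          ENNReal.mul_rpow_of_nonneg _ _ (by positivity),
          ENNReal.ofReal_rpow_of_nonneg (by positivity) (by positivity),
          ENNReal.ofReal_rpow_of_nonneg (by positivity) (by positivity),
          ENNReal.ofReal_mul (by positivity)]
        ring

theorem statement8 (n : ℕ) (hn : 0 < n) (s₁ s₂ : ℝ)
    (hs₁ : s₁ ≠ 0) (hs₂ : s₂ ≠ 0) (hs : s₁ ≠ s₂)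
    (α : ℝ) (hα₀ : 0 < α) (hαn : α < n)
    (p₁ p₂ p r s : ℝ) (hp₁ : 1 < p₁) (hp₂ : 1 < p₂)
    (hp : 1 / p = 1 / p₁ + 1 / p₂) (hplt : 1 / p₁ + 1 / p₂ < 1)
    (hr : r = p₁ / p) (hsdef : s = p₂ / p) :
    ∃ C : ℝ, 0 < C ∧ ∀ f g : EuclideanSpace ℝ (Fin n) → ℝ,
      Measurable f → Measurable g → (∀ x, 0 ≤ f x) → (∀ x, 0 ≤ g x) →
      ∀ x : EuclideanSpace ℝ (Fin n),
        BopL n α s₁ s₂ f g x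
          ≤ ENNReal.ofReal C * (IopL n α (fun y => f y ^ r) x) ^ (1 / r) *
              (IopL n α (fun y => g y ^ s) x) ^ (1 / s) :=
  statement8_general n s₁ s₂ hs₁ hs₂ α p₁ p₂ p r s hp₁ hp₂ hp hr hsdef
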